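/- Let a be a real number and define X(x,y,z) = (ax+xz, ay+yz, -2az - x² - y² - z²) and, for fixed i,j ∈ {0,1,2} with i+j = 2, Δ(x,y,z) = (y·xⁱyʲ·(4az + x² + y² + 2z²), -x·xⁱyʲ·(4az + x² + y² + 2z²), 0). Then for all (x,y,z) ∈ ℝ³, (DΔ)(x,y,z) · X(x,y,z) - (DX)(x,y,z) · Δ(x,y,z) = 0. -/

import Mathlib

/-!
Write `Δ = φ • R` with `R = (y, -x, 0)` the rotation field about the `z`-axis and
`φ = xⁱyʲ·h`, `h = 4az + x² + y² + 2z²`. Since `X` is equivariant under rotations about the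
`z`-axis, `[X, R] = 0`, so `[X, Δ] = (X φ) • R`. Along `X` the `(x, y)`-components scale by
`a + z`, hence by Euler's identity `X (xⁱyʲ) = (i + j)(a + z) xⁱyʲ`, while `X h = -2(a + z) h`;
for `i + j = 2` these cancel and `φ` is a first integral of `X`.
-/

open VectorField

lemma lieBracket_smul_right_eq_zero {𝕜 E : Type*} [NontriviallyNormedField 𝕜]
    [NormedAddCommGroup E] [NormedSpace 𝕜 E] {V W : E → E} {f : E → 𝕜} {x : E}
    (hf : DifferentiableAt 𝕜 f x) (hW : DifferentiableAt 𝕜 W x)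
    (hfV : fderiv 𝕜 f x (V x) = 0) (hVW : lieBracket 𝕜 V W x = 0) :
    lieBracket 𝕜 V (fun y ↦ f y • W y) x = 0 := by
  rw [lieBracket_smul_right hf hW, hfV, hVW, zero_smul, smul_zero, add_zero]

lemma mul_natCast_mul_pow_sub_one {R : Type*} [CommSemiring R] (x : R) (n : ℕ) :
    x * (n * x ^ (n - 1)) = n * x ^ n := by
  cases n with
  | zero => simp
  | succ n => rw [Nat.add_sub_cancel, pow_succ]; ring

section ProdCoordinates

variable {𝕜 E F G : Type*} [NontriviallyNormedField 𝕜] [NormedAddCommGroup E] [NormedSpace 𝕜 E]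
  [NormedAddCommGroup F] [NormedSpace 𝕜 F] [NormedAddCommGroup G] [NormedSpace 𝕜 G]

lemma fderiv_fun_fst_apply (p v : E × F) :
    fderiv 𝕜 (fun q : E × F ↦ q.1) p v = v.1 := by
  rw [fderiv_fst]; rfl

lemma fderiv_fun_snd_fst_apply (p v : E × F × G) :
    fderiv 𝕜 (fun q : E × F × G ↦ q.2.1) p v = v.2.1 := by
  rw [hasFDerivAt_snd.fst.fderiv]; rfl

lemma fderiv_fun_snd_snd_apply (p v : E × F × G) :
    fderiv 𝕜 (fun q : E × F × G ↦ q.2.2) p v = v.2.2 := by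
  rw [hasFDerivAt_snd.snd.fderiv]; rfl

end ProdCoordinates

namespace Langford

def field (a : ℝ) : ℝ × ℝ × ℝ → ℝ × ℝ × ℝ := fun p ↦
  (a * p.1 + p.1 * p.2.2, a * p.2.1 + p.2.1 * p.2.2,
    -2 * a * p.2.2 - p.1 ^ 2 - p.2.1 ^ 2 - p.2.2 ^ 2)

def rotationField : ℝ × ℝ × ℝ → ℝ × ℝ × ℝ := fun p ↦ (p.2.1, -p.1, 0)

def planarMonomial (i j : ℕ) : ℝ × ℝ × ℝ → ℝ := fun p ↦ p.1 ^ i * p.2.1 ^ j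

def quadric (a : ℝ) : ℝ × ℝ × ℝ → ℝ := fun p ↦
  4 * a * p.2.2 + p.1 ^ 2 + p.2.1 ^ 2 + 2 * p.2.2 ^ 2

def perturbation (a : ℝ) (i j : ℕ) : ℝ × ℝ × ℝ → ℝ × ℝ × ℝ := fun p ↦
  (planarMonomial i j p * quadric a p) • rotationField p

@[fun_prop] lemma differentiable_rotationField : Differentiable ℝ rotationField := by
  unfold rotationField; fun_prop

@[fun_prop] lemma differentiable_planarMonomial (i j : ℕ) :
    Differentiable ℝ (planarMonomial i j) := by
  unfold planarMonomial; fun_prop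

@[fun_prop] lemma differentiable_quadric (a : ℝ) : Differentiable ℝ (quadric a) := by
  unfold quadric; fun_prop

lemma fderiv_field_apply (a : ℝ) (p v : ℝ × ℝ × ℝ) :
    fderiv ℝ (field a) p v =
      ((a + p.2.2) * v.1 + p.1 * v.2.2, (a + p.2.2) * v.2.1 + p.2.1 * v.2.2,
        -2 * p.1 * v.1 - 2 * p.2.1 * v.2.1 - 2 * (a + p.2.2) * v.2.2) := by
  unfold field
  simp (disch := fun_prop) only [DifferentiableAt.fderiv_prodMk, fderiv_fun_add, fderiv_fun_mul,
    fderiv_fun_const, fderiv_fun_sub, fderiv_fun_pow, ContinuousLinearMap.prod_apply,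
    add_apply, sub_apply, smul_apply, Pi.zero_apply, zero_apply, fderiv_fun_fst_apply, fderiv_fun_snd_fst_apply,
    fderiv_fun_snd_snd_apply, smul_eq_mul, nsmul_eq_mul, Prod.mk.injEq]
  refine ⟨by ring, by ring, by ring⟩

lemma fderiv_rotationField_apply (p v : ℝ × ℝ × ℝ) :
    fderiv ℝ rotationField p v = rotationField v := by
  unfold rotationField
  simp (disch := fun_prop) only [DifferentiableAt.fderiv_prodMk, fderiv_fun_neg, fderiv_fun_const,
    Pi.zero_apply, ContinuousLinearMap.prod_apply, fderiv_fun_snd_fst_apply,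
    neg_apply, fderiv_fun_fst_apply, zero_apply]

lemma lieBracket_field_rotationField (a : ℝ) (p : ℝ × ℝ × ℝ) :
    lieBracket ℝ (field a) rotationField p = 0 := by
  rw [lieBracket, fderiv_rotationField_apply, fderiv_field_apply, sub_eq_zero]
  simp only [field, rotationField, Prod.mk.injEq]
  refine ⟨by ring, by ring, by ring⟩

lemma fderiv_planarMonomial_field (a : ℝ) (i j : ℕ) (p : ℝ × ℝ × ℝ) :
    fderiv ℝ (planarMonomial i j) p (field a p) =
      (i + j) * (a + p.2.2) * planarMonomial i j p := by
  unfold planarMonomial field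
  simp (disch := fun_prop) only [fderiv_fun_mul, fderiv_fun_pow, nsmul_eq_mul,
    add_apply, smul_apply, fderiv_fun_fst_apply, fderiv_fun_snd_fst_apply, smul_eq_mul]
  linear_combination (a + p.2.2) * (p.1 ^ i * mul_natCast_mul_pow_sub_one p.2.1 j +
    p.2.1 ^ j * mul_natCast_mul_pow_sub_one p.1 i)

lemma fderiv_quadric_field (a : ℝ) (p : ℝ × ℝ × ℝ) :
    fderiv ℝ (quadric a) p (field a p) = -2 * (a + p.2.2) * quadric a p := by
  unfold quadric field
  simp (disch := fun_prop) only [fderiv_fun_add, fderiv_fun_mul, fderiv_fun_const, fderiv_fun_pow,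
    Pi.zero_apply, smul_zero, add_zero, nsmul_eq_mul, add_apply,
    smul_apply, smul_eq_mul, fderiv_fun_fst_apply, fderiv_fun_snd_fst_apply,
    fderiv_fun_snd_snd_apply]
  ring

lemma fderiv_planarMonomial_mul_quadric_field {a : ℝ} {i j : ℕ} (hij : i + j = 2)
    (p : ℝ × ℝ × ℝ) :
    fderiv ℝ (fun q ↦ planarMonomial i j q * quadric a q) p (field a p) = 0 := by
  have hij' : (i : ℝ) + j = 2 := by exact_mod_cast hij
  rw [fderiv_fun_mul (by fun_prop) (by fun_prop), add_apply, smul_apply, smul_apply,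
    smul_eq_mul, smul_eq_mul, fderiv_planarMonomial_field, fderiv_quadric_field, hij']
  ring

lemma lieBracket_field_perturbation {a : ℝ} {i j : ℕ} (hij : i + j = 2) (p : ℝ × ℝ × ℝ) :
    lieBracket ℝ (field a) (perturbation a i j) p = 0 :=
  lieBracket_smul_right_eq_zero (by fun_prop) (by fun_prop)
    (fderiv_planarMonomial_mul_quadric_field hij p) (lieBracket_field_rotationField a p)

end Langford

theorem stmt3_general (a : ℝ) (i j : ℕ) (hij : i + j = 2)
    (X Δ : ℝ × ℝ × ℝ → ℝ × ℝ × ℝ)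
    (hX : X = fun p => (a*p.1 + p.1*p.2.2,
                        a*p.2.1 + p.2.1*p.2.2,
                        -2*a*p.2.2 - p.1^2 - p.2.1^2 - p.2.2^2))
    (hΔ : Δ = fun p =>
      (p.2.1 * (p.1^i * p.2.1^j) * (4*a*p.2.2 + p.1^2 + p.2.1^2 + 2*p.2.2^2),
       -p.1 * (p.1^i * p.2.1^j) * (4*a*p.2.2 + p.1^2 + p.2.1^2 + 2*p.2.2^2),
       0)) :
    ∀ p : ℝ × ℝ × ℝ, fderiv ℝ Δ p (X p) - fderiv ℝ X p (Δ p) = 0 := by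
  have hX' : X = Langford.field a := hX
  have hΔ' : Δ = Langford.perturbation a i j := by
    subst hΔ
    funext q
    simp only [Langford.perturbation, Langford.planarMonomial, Langford.quadric,
      Langford.rotationField, Prod.smul_mk, smul_eq_mul, mul_zero, Prod.mk.injEq]
    refine ⟨by ring, by ring, trivial⟩
  subst hX' hΔ'
  exact Langford.lieBracket_field_perturbation hij

theorem stmt3 (a : ℝ) (i j : ℕ) (hi : i ≤ 2) (hj : j ≤ 2) (hij : i + j = 2)
    (X Δ : ℝ × ℝ × ℝ → ℝ × ℝ × ℝ)
    (hX : X = fun p => (a*p.1 + p.1*p.2.2,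
                        a*p.2.1 + p.2.1*p.2.2,
                        -2*a*p.2.2 - p.1^2 - p.2.1^2 - p.2.2^2))
    (hΔ : Δ = fun p =>
      (p.2.1 * (p.1^i * p.2.1^j) * (4*a*p.2.2 + p.1^2 + p.2.1^2 + 2*p.2.2^2),
       -p.1 * (p.1^i * p.2.1^j) * (4*a*p.2.2 + p.1^2 + p.2.1^2 + 2*p.2.2^2),
       0)) :
    ∀ p : ℝ × ℝ × ℝ, fderiv ℝ Δ p (X p) - fderiv ℝ X p (Δ p) = 0 :=
  stmt3_general a i j hij X Δ hX hΔ
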